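/- For all t ∈ (0, 1/2], the inequality h(1/4) - 1/2 ≥ (1/2)(h(t/2) + h((1-t)/2) - 1) holds, with equality iff t = 1/2, where h is the binary entropy function. -/

import Mathlib

open Set

noncomputable def binent (x : ℝ) : ℝ := -x * Real.logb 2 x - (1 - x) * Real.logb 2 (1 - x)

/-! The two arguments `t / 2` and `(1 - t) / 2` average to `1 / 4`, so the inequality is the
midpoint form of the strict concavity of binary entropy, with equality exactly when the two
arguments coincide, i.e. when `t = 1 / 2`. -/

open Real

lemma binent_eq_binEntropy_div_log_two (x : ℝ) : binent x = binEntropy x / log 2 := by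
  simp only [binent, binEntropy, logb, log_inv]
  ring

lemma StrictConcaveOn.add_lt_two_mul_apply_midpoint {s : Set ℝ} {f : ℝ → ℝ}
    (hf : StrictConcaveOn ℝ s f) {a b : ℝ} (ha : a ∈ s) (hb : b ∈ s) (hab : a ≠ b) :
    f a + f b < 2 * f ((a + b) / 2) := by
  have h := hf.2 ha hb hab (by norm_num : (0 : ℝ) < 1 / 2) (by norm_num : (0 : ℝ) < 1 / 2)
    (by norm_num)
  simp only [smul_eq_mul] at h
  rw [show 1 / 2 * a + 1 / 2 * b = (a + b) / 2 by ring] at h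
  linarith

lemma binent_div_two_add_binent_one_sub_div_two_lt {t : ℝ} (ht₀ : 0 ≤ t) (ht₁ : t ≤ 1)
    (ht : t ≠ 1 / 2) : binent (t / 2) + binent ((1 - t) / 2) < 2 * binent (1 / 4) := by
  have hmem : ∀ x, 0 ≤ x → x ≤ 1 → x / 2 ∈ Icc (0 : ℝ) 1 :=
    fun x hx₀ hx₁ => ⟨by linarith, by linarith⟩
  have hne : t / 2 ≠ (1 - t) / 2 := fun h => ht (by linarith)
  have h := strictConcave_binEntropy.add_lt_two_mul_apply_midpoint
    (hmem t ht₀ ht₁) (hmem (1 - t) (by linarith) (by linarith)) hne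
  rw [show (t / 2 + (1 - t) / 2) / 2 = (1 / 4 : ℝ) by ring] at h
  simp only [binent_eq_binEntropy_div_log_two, ← add_div, mul_div_assoc']
  exact div_lt_div_of_pos_right h (log_pos one_lt_two)

theorem stmt_19 : ∀ t ∈ Ioc (0 : ℝ) (1 / 2),
    (1 / 2) * (binent (t / 2) + binent ((1 - t) / 2) - 1) ≤ binent (1 / 4) - 1 / 2 ∧
      ((1 / 2) * (binent (t / 2) + binent ((1 - t) / 2) - 1) = binent (1 / 4) - 1 / 2 ↔
        t = 1 / 2) := by
  rintro t ⟨ht₀, ht₁⟩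
  rcases eq_or_ne t (1 / 2) with rfl | ht
  · rw [show (1 - 1 / 2 : ℝ) / 2 = 1 / 4 by norm_num, show (1 / 2 : ℝ) / 2 = 1 / 4 by norm_num]
    exact ⟨by linarith, iff_of_true (by ring) rfl⟩
  · have h := binent_div_two_add_binent_one_sub_div_two_lt ht₀.le (by linarith) ht
    exact ⟨by linarith, iff_of_false (by linarith) ht⟩
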